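/- Let K ⊆ L be an extension of fields and let T = K + X·L[X]. Then T is a Noetherian ring if and only if the field extension K ⊆ L is finite, i.e. [L : K] < ∞. -/

import Mathlib

/-!
If `s` spans `B` over `R`, then `R + X·B[X]` is the `R`-algebra generated by the finitely many
`b X` with `b ∈ s` (all `a X` lie in their `R`-span, and `a Xⁿ⁺¹ = (a X) · (1 X)ⁿ`), hence
Noetherian when `R` is, by Hilbert's basis theorem. Conversely, if `R + X·B[X]` is Noetherian,
its ideal `X·B[X]` is finitely generated; an element of `R + X·B[X]` acts on the linear
coefficients of `X·B[X]` through its constant term in `R`, so the linear coefficients of finitely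
many generators span `B` over `R`.
-/

/-- The polynomial composite `A + X·B[X]`: the subring of `B[X]` of polynomials
whose constant coefficient lies in `A`. -/
def Subring.composite {B : Type*} [CommRing B] (A : Subring B) : Subring (Polynomial B) where
  carrier := {f : Polynomial B | f.coeff 0 ∈ A}
  mul_mem' {f g} hf hg := by
    simp only [Set.mem_setOf_eq, Polynomial.mul_coeff_zero] at *
    exact mul_mem hf hg
  one_mem' := by
    simp only [Set.mem_setOf_eq, Polynomial.coeff_one_zero]
    exact one_mem A
  add_mem' {f g} hf hg := by
    simp only [Set.mem_setOf_eq, Polynomial.coeff_add] at *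
    exact add_mem hf hg
  zero_mem' := by
    simp only [Set.mem_setOf_eq, Polynomial.coeff_zero]
    exact zero_mem A
  neg_mem' {f} hf := by
    simp only [Set.mem_setOf_eq, Polynomial.coeff_neg] at *
    exact neg_mem hf

theorem Subring.mem_composite {B : Type*} [CommRing B] (A : Subring B) (f : Polynomial B) :
    f ∈ A.composite ↔ f.coeff 0 ∈ A := Iff.rfl

open Polynomial

theorem Subring.monomial_one_mem_composite {B : Type*} [CommRing B] (A : Subring B) (b : B) :
    monomial 1 b ∈ A.composite := by
  simp [mem_composite, coeff_monomial, zero_mem]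

namespace Polynomial

variable {R B : Type*} [CommRing R] [CommRing B] [Algebra R B]

theorem monomial_one_mem_adjoin_of_span_eq_top {s : Set B} (hs : Submodule.span R s = ⊤)
    (b : B) : monomial 1 b ∈ Algebra.adjoin R (monomial 1 '' s) := by
  have hb : b ∈ Submodule.span R s := hs ▸ Submodule.mem_top
  have hmap := Submodule.mem_map_of_mem (f := (monomial 1 : B →ₗ[B] B[X]).restrictScalars R) hb
  rw [Submodule.map_span, LinearMap.coe_restrictScalars] at hmap
  exact (Submodule.span_le (p := Subalgebra.toSubmodule (Algebra.adjoin R (monomial 1 '' s)))).mpr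
    Algebra.subset_adjoin hmap

theorem X_mul_mem_adjoin_of_span_eq_top {s : Set B} (hs : Submodule.span R s = ⊤) (q : B[X]) :
    X * q ∈ Algebra.adjoin R (monomial 1 '' s) := by
  have hX : X ∈ Algebra.adjoin R (monomial 1 '' s) := by
    simpa only [monomial_one_one_eq_X] using monomial_one_mem_adjoin_of_span_eq_top hs 1
  induction q using Polynomial.induction_on' with
  | add p q hp hq => rw [mul_add]; exact add_mem hp hq
  | monomial n a =>
    rw [X_mul_monomial, add_comm, ← monomial_mul_X_pow]
    exact mul_mem (monomial_one_mem_adjoin_of_span_eq_top hs a) (pow_mem hX n)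

theorem adjoin_monomial_one_eq_composite {s : Set B} (hs : Submodule.span R s = ⊤) :
    (Algebra.adjoin R (monomial 1 '' s)).toSubring = (algebraMap R B).range.composite := by
  apply le_antisymm
  · rw [Algebra.adjoin_eq_ring_closure, Subring.closure_le]
    rintro _ (⟨r, rfl⟩ | ⟨b, -, rfl⟩)
    · simp [Subring.mem_composite, algebraMap_apply]
    · exact Subring.monomial_one_mem_composite _ b
  · intro g hg
    obtain ⟨r, hr⟩ := (Subring.mem_composite _ g).mp hg
    rw [Subalgebra.mem_toSubring, ← X_mul_divX_add g, ← hr, ← algebraMap_apply]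
    exact add_mem (X_mul_mem_adjoin_of_span_eq_top hs _) (Subalgebra.algebraMap_mem _ r)

theorem isNoetherianRing_composite_of_finite [IsNoetherianRing R] [Module.Finite R B] :
    IsNoetherianRing (algebraMap R B).range.composite := by
  obtain ⟨s, hs⟩ := Module.finite_def.mp ‹Module.Finite R B›
  have hfg : (Algebra.adjoin R (monomial 1 '' (s : Set B))).FG :=
    Subalgebra.fg_def.mpr ⟨_, s.finite_toSet.image _, rfl⟩
  have := isNoetherianRing_of_fg hfg
  exact isNoetherianRing_of_ringEquiv _
    (RingEquiv.subringCongr (adjoin_monomial_one_eq_composite hs))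

/-- If `g.coeff 0 = 0` then `(f * g).coeff 1 = f.coeff 0 * g.coeff 1`, and `f.coeff 0 ∈ R`. -/
theorem coeff_one_mem_span_of_mem_ideal_span {s : Set (algebraMap R B).range.composite}
    (hs : ∀ g ∈ s, (g : B[X]).coeff 0 = 0) {f : (algebraMap R B).range.composite}
    (hf : f ∈ Ideal.span s) :
    (f : B[X]).coeff 0 = 0 ∧ (f : B[X]).coeff 1 ∈
      Submodule.span R ((fun g : (algebraMap R B).range.composite => (g : B[X]).coeff 1) '' s) := by
  induction hf using Submodule.span_induction with
  | mem g hg => exact ⟨hs g hg, Submodule.subset_span ⟨g, hg, rfl⟩⟩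
  | zero => simp
  | add x y _ _ hx hy => simp [hx.1, hy.1, add_mem hx.2 hy.2]
  | smul a x _ hx =>
    obtain ⟨r, hr⟩ := (Subring.mem_composite _ _).mp a.2
    have hcoeff : ((a • x : (algebraMap R B).range.composite) : B[X]).coeff 1 =
        r • (x : B[X]).coeff 1 := by
      rw [smul_eq_mul, Subring.coe_mul, mul_coeff_one, hx.1, mul_zero, add_zero, ← hr,
        Algebra.smul_def]
    refine ⟨?_, hcoeff ▸ Submodule.smul_mem _ r hx.2⟩
    rw [smul_eq_mul, Subring.coe_mul, mul_coeff_zero, hx.1, mul_zero]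

theorem finite_of_isNoetherianRing_composite
    (h : IsNoetherianRing (algebraMap R B).range.composite) : Module.Finite R B := by
  classical
  set T := (algebraMap R B).range.composite
  let I : Ideal T := RingHom.ker (constantCoeff.comp T.subtype)
  obtain ⟨s, hs⟩ := (isNoetherianRing_iff_ideal_fg T).mp h I
  have hsI : ∀ g : T, g ∈ (s : Set T) → (g : B[X]).coeff 0 = 0 :=
    fun g hg => by simpa [I, RingHom.mem_ker] using (hs ▸ Ideal.subset_span hg : g ∈ I)
  refine ⟨⟨s.image fun g : T => (g : B[X]).coeff 1, eq_top_iff.mpr fun b _ => ?_⟩⟩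
  have hb : (⟨monomial 1 b, Subring.monomial_one_mem_composite _ b⟩ : T) ∈ Ideal.span s := by
    rw [hs]
    simp [I, RingHom.mem_ker]
  simpa using (coeff_one_mem_span_of_mem_ideal_span hsI hb).2

end Polynomial

theorem composite_isNoetherianRing_iff (K L : Type*) [Field K] [Field L] [Algebra K L] :
    IsNoetherianRing ((algebraMap K L).range.composite) ↔ Module.Finite K L :=
  ⟨finite_of_isNoetherianRing_composite, fun _ => isNoetherianRing_composite_of_finite⟩
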